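/- Let R be a commutative Noetherian local ring of depth t, M a finitely generated R-module, and r an integer with 0 ≤ r ≤ t such that, in case r < t, Ext_R^i(M, R) = 0 for all 1 ≤ i ≤ t − r. Let N be a nonzero finitely generated R-module with pd_R N ≤ t − r. Then Tor_j^R(Hom_R(M, R), N) = 0 for all j > 0, and the natural evaluation map Hom_R(M, R) ⊗_R N → Hom_R(M, N), sending f ⊗ n to the homomorphism m ↦ f(m)·n, is an isomorphism of R-modules. -/

import Mathlib

open CategoryTheory

universe u

noncomputable section

open Classical IsLocalRing in
/-- The depth of a module `M` over a local ring `R`: the supremum of the lengths of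
`M`-regular sequences contained in the maximal ideal, with the convention that the
depth of the zero module is `∞`. -/
def moduleDepth (R : Type u) [CommRing R] [IsLocalRing R]
    (M : Type*) [AddCommGroup M] [Module R M] : ℕ∞ :=
  if Subsingleton M then ⊤
  else sSup {n : ℕ∞ | ∃ rs : List R, (∀ r ∈ rs, r ∈ maximalIdeal R) ∧
    RingTheory.Sequence.IsRegular M rs ∧ (rs.length : ℕ∞) = n}

/-- A Noetherian local ring is Cohen–Macaulay if its depth equals its Krull dimension. -/
def IsCohenMacaulayLocalRing (R : Type u) [CommRing R] [IsLocalRing R] : Prop :=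
  ringKrullDim R = (moduleDepth R R : WithBot ℕ∞)

/-- A (not necessarily local) ring is Cohen–Macaulay if all its localizations at primes are
Cohen–Macaulay local rings. -/
def IsCohenMacaulayRing (S : Type u) [CommRing S] : Prop :=
  ∀ (q : Ideal S) [q.IsPrime], IsCohenMacaulayLocalRing (Localization.AtPrime q)

open IsLocalRing in
/-- A local ring is regular if its maximal ideal is generated by `dim R` elements. -/
def IsRegularLocalRing' (R : Type u) [CommRing R] [IsLocalRing R] : Prop :=
  ∃ s : Finset R, Ideal.span (s : Set R) = maximalIdeal R ∧
    (s.card : WithBot ℕ∞) = ringKrullDim R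

/-- `M` has projective dimension `< n` over `R`: it admits a projective resolution that
vanishes in degrees `≥ n`. -/
def HasProjDimLT (R : Type u) [CommRing R] (M : Type u) [AddCommGroup M] [Module R M]
    (n : ℕ) : Prop :=
  ∃ P : ProjectiveResolution (ModuleCat.of R M), ∀ i, n ≤ i → Limits.IsZero (P.complex.X i)

/-- `M` has projective dimension `≤ n` over `R`. -/
def HasProjDimLE (R : Type u) [CommRing R] (M : Type u) [AddCommGroup M] [Module R M]
    (n : ℕ) : Prop :=
  HasProjDimLT R M (n + 1)

/-- `M` has finite projective dimension over `R`. -/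
def HasFiniteProjDim (R : Type u) [CommRing R] (M : Type u) [AddCommGroup M] [Module R M] :
    Prop :=
  ∃ n, HasProjDimLE R M n

/-- `M` has injective dimension `< n` over `R`: it admits an injective resolution that
vanishes in degrees `≥ n`. -/
def HasInjDimLT (R : Type u) [CommRing R] (M : Type u) [AddCommGroup M] [Module R M]
    (n : ℕ) : Prop :=
  ∃ I : InjectiveResolution (ModuleCat.of R M), ∀ i, n ≤ i → Limits.IsZero (I.cocomplex.X i)

/-- `M` has injective dimension `≤ n` over `R`. -/
def HasInjDimLE (R : Type u) [CommRing R] (M : Type u) [AddCommGroup M] [Module R M]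
    (n : ℕ) : Prop :=
  HasInjDimLT R M (n + 1)

/-- `M` has finite injective dimension over `R`. -/
def HasFiniteInjDim (R : Type u) [CommRing R] (M : Type u) [AddCommGroup M] [Module R M] :
    Prop :=
  ∃ n, HasInjDimLE R M n

/-- The projective dimension of `M` over `R`, as an element of `ℕ∞` (equal to `⊤` when
the projective dimension is infinite). -/
def projDim (R : Type u) [CommRing R] (M : Type u) [AddCommGroup M] [Module R M] : ℕ∞ :=
  sInf {n : ℕ∞ | ∃ m : ℕ, (m : ℕ∞) = n ∧ HasProjDimLE R M m}

/-- The injective dimension of `M` over `R`, as an element of `ℕ∞` (equal to `⊤` when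
the injective dimension is infinite). -/
def injDim (R : Type u) [CommRing R] (M : Type u) [AddCommGroup M] [Module R M] : ℕ∞ :=
  sInf {n : ℕ∞ | ∃ m : ℕ, (m : ℕ∞) = n ∧ HasInjDimLE R M m}

/-- Vanishing of `Ext_R^i(M, N)`. -/
abbrev extVanish (R : Type u) [CommRing R] (M N : Type u)
    [AddCommGroup M] [Module R M] [AddCommGroup N] [Module R N] (i : ℕ) : Prop :=
  Subsingleton (((Ext R (ModuleCat.{u} R) i).obj
    (Opposite.op (ModuleCat.of R M))).obj (ModuleCat.of R N))

/-- Vanishing of `Tor^R_i(M, N)`. -/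
abbrev torVanish (R : Type u) [CommRing R] (M N : Type u)
    [AddCommGroup M] [Module R M] [AddCommGroup N] [Module R N] (i : ℕ) : Prop :=
  Subsingleton (((Tor (ModuleCat.{u} R) i).obj (ModuleCat.of R M)).obj (ModuleCat.of R N))

/-- The Krull dimension of the support of a module. -/
def moduleSupportDim (R : Type u) [CommRing R] (M : Type u) [AddCommGroup M] [Module R M] :
    WithBot ℕ∞ :=
  Order.krullDim (Module.support R M)

/-- The Serre-type condition `(S̃_n)`:
`depth_{R_p} M_p ≥ min {n, depth R_p}` for every prime `p` of `R`. -/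
def SerreCondTilde (R : Type u) [CommRing R] (M : Type u) [AddCommGroup M] [Module R M]
    (n : ℕ) : Prop :=
  ∀ (p : Ideal R) [p.IsPrime],
    min (n : ℕ∞) (moduleDepth (Localization.AtPrime p) (Localization.AtPrime p)) ≤
      moduleDepth (Localization.AtPrime p) (LocalizedModule p.primeCompl M)

/-- A module `X` over a ring `S` is maximal Cohen–Macaulay if for every prime `q` of `S`
the localization `X_q` is either zero or has depth equal to `dim S_q`. -/
def IsMaximalCohenMacaulay (S : Type u) [CommRing S] (X : Type u)
    [AddCommGroup X] [Module S X] : Prop :=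
  ∀ (q : Ideal S) [q.IsPrime],
    Subsingleton (LocalizedModule q.primeCompl X) ∨
      (moduleDepth (Localization.AtPrime q) (LocalizedModule q.primeCompl X) : WithBot ℕ∞) =
        ringKrullDim (Localization.AtPrime q)

/-- A module `X` over a ring `S` is locally free on `Spec S ∖ Max S` if `X_q` is free over
`S_q` for every non-maximal prime `q` of `S`. -/
def IsLocallyFreeOffMaximal (S : Type u) [CommRing S] (X : Type u)
    [AddCommGroup X] [Module S X] : Prop :=
  ∀ (q : Ideal S) [q.IsPrime], ¬ q.IsMaximal →
    Module.Free (Localization.AtPrime q) (LocalizedModule q.primeCompl X)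

end

/-!
Write `s = t - r` and compute `Ext(M, -)` from a resolution `G` of `M` by finite free modules.
Since each `Gᵢ` is finite, `Hom(Gᵢ, -)` commutes with direct sums, so `Extⁱ(M, R) = 0` for
`1 ≤ i ≤ s` gives `Extⁱ(M, P) = 0` for every projective `P`; dimension shifting along
`0 → K → P₀ → Y → 0` then gives `Extⁱ(M, Y) = 0` for `1 ≤ i ≤ s - pd Y`.

The map `M^* ⊗ Y → Hom(M, Y)` is bijective for projective `Y`, and by induction on `pd Y ≤ s`
for all such `Y`: along `0 → K → P₀ → Y → 0` the tensor side is right exact, and so is the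
`Hom(M, -)` side because `Ext¹(M, K) = 0`. For the syzygies `K ⊆ P` of `N` this makes
`M^* ⊗ K → M^* ⊗ P` injective, since `Hom(M, -)` preserves injections; hence `M^* ⊗ -` keeps a
projective resolution of `N` exact in positive degrees, which is the vanishing of `Tor`.
-/

section LinearAlgebra

variable {R : Type*} [CommRing R] {A B C M : Type*} [AddCommGroup A] [Module R A]
  [AddCommGroup B] [Module R B] [AddCommGroup C] [Module R C] [AddCommGroup M] [Module R M]

lemma exact_subtype_comp_of_surjective {f : B →ₗ[R] C} {g : A →ₗ[R] LinearMap.ker f}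
    (hg : Function.Surjective g) : Function.Exact ((LinearMap.ker f).subtype ∘ₗ g) f := by
  rw [LinearMap.exact_iff, LinearMap.range_comp, LinearMap.range_eq_top.2 hg, Submodule.map_top,
    Submodule.range_subtype]

lemma exact_compRight_subtype_ker (p : B →ₗ[R] C) :
    Function.Exact ((LinearMap.ker p).subtype.compRight R : (M →ₗ[R] _) →ₗ[R] M →ₗ[R] B)
      (p.compRight R) := by
  intro φ
  simp only [LinearMap.compRight_apply, Set.mem_range]
  refine ⟨fun hφ => ⟨φ.codRestrict _ fun m => congr($hφ m), rfl⟩, ?_⟩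
  rintro ⟨ψ, rfl⟩
  ext m
  exact (ψ m).2

lemma lTensor_injective_of_dualTensorHom_injective {i : A →ₗ[R] B} (hi : Function.Injective i)
    (hA : Function.Injective (dualTensorHom R M A)) :
    Function.Injective (i.lTensor (Module.Dual R M)) := by
  have hcompRight : Function.Injective (i.compRight R : (M →ₗ[R] A) →ₗ[R] M →ₗ[R] B) :=
    fun φ ψ h => LinearMap.ext fun m => hi congr($h m)
  have hcomp := hcompRight.comp hA
  rw [← LinearMap.coe_comp, ← dualTensorHom_comp_lTensor, LinearMap.coe_comp] at hcomp
  exact hcomp.of_comp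

lemma dualTensorHom_bijective_of_surjective [Module.Finite R M] [Module.Projective R B]
    {p : B →ₗ[R] C} (hp : Function.Surjective p)
    (hker : Function.Surjective (dualTensorHom R M (LinearMap.ker p)))
    (hlift : Function.Surjective (p.compRight R : (M →ₗ[R] B) →ₗ[R] M →ₗ[R] C)) :
    Function.Bijective (dualTensorHom R M C) :=
  LinearMap.bijective_of_surjective_of_bijective_of_right_exact _ _ _ _ _ _ _
    (dualTensorHom_comp_lTensor _).symm (dualTensorHom_comp_lTensor _).symm
    (lTensor_exact _ (LinearMap.exact_subtype_ker_map p) hp) (exact_compRight_subtype_ker p)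
    hker dualTensorHom_bijective_of_finite_left_projective_right
    (LinearMap.lTensor_surjective _ hp) hlift

end LinearAlgebra

lemma Finsupp.exists_mapRange_eq {ι A B : Type*} [Zero A] [Zero B] {L : A → B} (hL : L 0 = 0)
    (f : ι →₀ B) (hf : ∀ i, ∃ a, L a = f i) : ∃ c : ι →₀ A, c.mapRange L hL = f := by
  classical
  choose g hg using hf
  refine ⟨Finsupp.onFinset f.support (fun i => if f i = 0 then 0 else g i) fun i hi => ?_, ?_⟩
  · simp only [ne_eq, ite_eq_left_iff, Classical.not_imp] at hi
    exact Finsupp.mem_support_iff.2 hi.1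
  · ext i
    by_cases hi : f i = 0 <;> simp [hi, hg, hL]

/-- A projective resolution `⋯ → X₁ → X₀ → N → 0` written with linear maps instead of as a chain
complex in `ModuleCat`. -/
structure LinearProjResolution (R : Type u) [CommRing R] (N : Type u) [AddCommGroup N]
    [Module R N] where
  X : ℕ → ModuleCat.{u} R
  d : ∀ i, X (i + 1) →ₗ[R] X i
  ε : X 0 →ₗ[R] N
  projective : ∀ i, Module.Projective R (X i)
  ε_surjective : Function.Surjective ε
  exact_d_ε : Function.Exact (d 0) ε
  exact_d_d : ∀ i, Function.Exact (d (i + 1)) (d i)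

namespace LinearProjResolution

section Syzygy

variable {R : Type u} [CommRing R] {N : Type u} [AddCommGroup N] [Module R N]
  (D : LinearProjResolution R N)

def LengthLE (q : ℕ) : Prop :=
  ∀ i, q < i → Subsingleton (D.X i)

def shift : LinearProjResolution R (LinearMap.ker D.ε) where
  X i := D.X (i + 1)
  d i := D.d (i + 1)
  ε := (D.d 0).codRestrict _ fun x => LinearMap.mem_ker.2 (D.exact_d_ε.apply_apply_eq_zero x)
  projective i := D.projective (i + 1)
  ε_surjective := by
    rintro ⟨y, hy⟩
    obtain ⟨x, rfl⟩ := (D.exact_d_ε y).1 hy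
    exact ⟨x, rfl⟩
  exact_d_ε := by
    rw [LinearMap.exact_iff, LinearMap.ker_codRestrict, ← LinearMap.exact_iff]
    exact D.exact_d_d 0
  exact_d_d i := D.exact_d_d (i + 1)

lemma subtype_comp_shift_ε : (LinearMap.ker D.ε).subtype ∘ₗ D.shift.ε = D.d 0 :=
  LinearMap.subtype_comp_codRestrict _ _ _

variable {D}

lemma LengthLE.shift {q : ℕ} (h : D.LengthLE q) : D.shift.LengthLE (q - 1) :=
  fun i hi => h (i + 1) (by omega)

lemma LengthLE.subsingleton_ker (h : D.LengthLE 0) : Subsingleton (LinearMap.ker D.ε) :=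
  have : Subsingleton (D.shift.X 0) := h 1 one_pos
  D.shift.ε_surjective.subsingleton

end Syzygy

section Ext

variable {R : Type u} [CommRing R] {M : Type u} [AddCommGroup M] [Module R M]
  (G : LinearProjResolution R M)

/-- `Ext^(k+1)(M, Y) = 0`, computed from the resolution `G` of `M`. -/
def ExtSuccVanishes (k : ℕ) (Y : Type*) [AddCommGroup Y] [Module R Y] : Prop :=
  ∀ ψ : G.X (k + 1) →ₗ[R] Y, ψ ∘ₗ G.d (k + 1) = 0 → ∃ χ : G.X k →ₗ[R] Y, χ ∘ₗ G.d k = ψ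

variable {G} {k : ℕ} {Y P : Type*} [AddCommGroup Y] [Module R Y] [AddCommGroup P] [Module R P]

lemma ExtSuccVanishes.of_subsingleton [Subsingleton Y] : G.ExtSuccVanishes k Y :=
  fun _ _ => ⟨0, Subsingleton.elim _ _⟩

lemma ExtSuccVanishes.of_retract (p : P →ₗ[R] Y) (s : Y →ₗ[R] P) (hps : p ∘ₗ s = LinearMap.id)
    (h : G.ExtSuccVanishes k P) : G.ExtSuccVanishes k Y := fun ψ hψ =>
  let ⟨χ, hχ⟩ := h (s ∘ₗ ψ) (by rw [LinearMap.comp_assoc, hψ, LinearMap.comp_zero])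
  ⟨p ∘ₗ χ, by rw [LinearMap.comp_assoc, hχ, ← LinearMap.comp_assoc, hps, LinearMap.id_comp]⟩

lemma ExtSuccVanishes.finsupp [Module.Finite R (G.X (k + 1))] (h : G.ExtSuccVanishes k Y)
    (ι : Type*) : G.ExtSuccVanishes k (ι →₀ Y) := by
  intro ψ hψ
  obtain ⟨f, rfl⟩ := (LinearMap.finsuppLinearMap_bijective_of_moduleFinite R _ Y ι R).2 ψ
  have hcocycle : ∀ i, f i ∘ₗ G.d (k + 1) = 0 := fun i => by
    ext x; simpa using congr($hψ x i)
  obtain ⟨c, hc⟩ := Finsupp.exists_mapRange_eq (L := fun χ : G.X k →ₗ[R] Y => χ ∘ₗ G.d k)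
    (LinearMap.zero_comp _) f fun i => h (f i) (hcocycle i)
  refine ⟨LinearMap.finsuppLinearMap R c, ?_⟩
  ext x i
  simp [← hc]

lemma ExtSuccVanishes.of_projective [Module.Finite R (G.X (k + 1))] [Module.Projective R P]
    (h : G.ExtSuccVanishes k R) : G.ExtSuccVanishes k P :=
  have ⟨s, hs⟩ := Module.projective_def'.1 ‹Module.Projective R P›
  (h.finsupp P).of_retract _ s hs

/-- The obstruction to lifting `ψ` along `p` is a `(k+1)`-cocycle with values in `ker p`. -/
lemma ExtSuccVanishes.exists_lift_cocycle {p : P →ₗ[R] Y} (hp : Function.Surjective p)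
    (h : G.ExtSuccVanishes k (LinearMap.ker p)) {ψ : G.X k →ₗ[R] Y} (hψ : ψ ∘ₗ G.d k = 0) :
    ∃ ψ' : G.X k →ₗ[R] P, p ∘ₗ ψ' = ψ ∧ ψ' ∘ₗ G.d k = 0 := by
  have := G.projective k
  obtain ⟨α, rfl⟩ := Module.projective_lifting_property p ψ hp
  have hmem (x : G.X (k + 1)) : α (G.d k x) ∈ LinearMap.ker p := congr($hψ x)
  obtain ⟨θ, hθ⟩ := h ((α ∘ₗ G.d k).codRestrict _ hmem) <| by
    ext x
    simp [(G.exact_d_d k).apply_apply_eq_zero x]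
  refine ⟨α - (LinearMap.ker p).subtype ∘ₗ θ, ?_, ?_⟩
  · ext x
    simp [LinearMap.mem_ker.1 (θ x).2]
  · ext x
    simpa [sub_eq_zero] using congr(($hθ x : P)).symm

lemma ExtSuccVanishes.of_surjective {p : P →ₗ[R] Y} (hp : Function.Surjective p)
    (hker : G.ExtSuccVanishes (k + 1) (LinearMap.ker p)) (hP : G.ExtSuccVanishes k P) :
    G.ExtSuccVanishes k Y := by
  intro ψ hψ
  obtain ⟨ψ', rfl, hψ'⟩ := hker.exists_lift_cocycle hp hψ
  obtain ⟨χ, rfl⟩ := hP ψ' hψ'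
  exact ⟨p ∘ₗ χ, LinearMap.comp_assoc _ _ _⟩

lemma ExtSuccVanishes.surjective_compRight {p : P →ₗ[R] Y} (hp : Function.Surjective p)
    (h : G.ExtSuccVanishes 0 (LinearMap.ker p)) :
    Function.Surjective (p.compRight R : (M →ₗ[R] P) →ₗ[R] M →ₗ[R] Y) := by
  intro φ
  obtain ⟨β', hβ', hβ'd⟩ := h.exists_lift_cocycle hp (ψ := φ ∘ₗ G.ε) <| by
    rw [LinearMap.comp_assoc, G.exact_d_ε.linearMap_comp_eq_zero, LinearMap.comp_zero]
  obtain ⟨β, rfl⟩ := (LinearMap.exact_lcomp_of_exact_of_surjective P G.exact_d_ε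
    G.ε_surjective β').1 hβ'd
  refine ⟨β, (LinearMap.cancel_right G.ε_surjective).1 ?_⟩
  simpa [LinearMap.comp_assoc, LinearMap.lcomp_apply'] using hβ'

end Ext

section Induction

variable {R : Type u} [CommRing R] {M : Type u} [AddCommGroup M] [Module R M]
  {G : LinearProjResolution R M} [∀ i, Module.Finite R (G.X i)] {s : ℕ}

theorem extSuccVanishes_of_lengthLE (hR : ∀ k, k + 1 ≤ s → G.ExtSuccVanishes k R) :
    ∀ (q : ℕ) {Y : Type u} [AddCommGroup Y] [Module R Y] (D : LinearProjResolution R Y),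
      D.LengthLE q → ∀ k, k + 1 + q ≤ s → G.ExtSuccVanishes k Y
  | 0, _, _, _, D, hD, k, hk =>
    have := hD.subsingleton_ker
    have := D.projective 0
    .of_surjective D.ε_surjective .of_subsingleton (.of_projective (hR k (by omega)))
  | q + 1, _, _, _, D, hD, k, hk =>
    have := D.projective 0
    .of_surjective D.ε_surjective
      (extSuccVanishes_of_lengthLE hR q D.shift hD.shift (k + 1) (by omega))
      (.of_projective (hR k (by omega)))

variable [Module.Finite R M]

theorem dualTensorHom_bijective_of_lengthLE (hR : ∀ k, k + 1 ≤ s → G.ExtSuccVanishes k R) :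
    ∀ (q : ℕ) {Y : Type u} [AddCommGroup Y] [Module R Y] (D : LinearProjResolution R Y),
      D.LengthLE q → q ≤ s → Function.Bijective (dualTensorHom R M Y)
  | 0, _, _, _, D, hD, _ =>
    have := hD.subsingleton_ker
    have := D.projective 0
    dualTensorHom_bijective_of_surjective D.ε_surjective (fun _ => ⟨0, Subsingleton.elim _ _⟩)
      ((ExtSuccVanishes.of_subsingleton (G := G)).surjective_compRight D.ε_surjective)
  | q + 1, _, _, _, D, hD, hq =>
    have := D.projective 0
    dualTensorHom_bijective_of_surjective D.ε_surjective
      (dualTensorHom_bijective_of_lengthLE hR q D.shift hD.shift (by omega)).2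
      ((extSuccVanishes_of_lengthLE hR q D.shift hD.shift 0 (by omega)).surjective_compRight
        D.ε_surjective)

theorem exact_lTensor_of_lengthLE (hR : ∀ k, k + 1 ≤ s → G.ExtSuccVanishes k R) :
    ∀ (j q : ℕ) {Y : Type u} [AddCommGroup Y] [Module R Y] (D : LinearProjResolution R Y),
      D.LengthLE q → q ≤ s →
        Function.Exact ((D.d (j + 1)).lTensor (Module.Dual R M)) ((D.d j).lTensor (Module.Dual R M))
  | 0, q, _, _, _, D, hD, hq => by
    have hinj := lTensor_injective_of_dualTensorHom_injective (M := M)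
      (LinearMap.ker D.ε).injective_subtype
      (dualTensorHom_bijective_of_lengthLE hR (q - 1) D.shift hD.shift (by omega)).1
    have := hinj.comp_exact_iff_exact.2 (lTensor_exact _ D.shift.exact_d_ε D.shift.ε_surjective)
    rwa [← LinearMap.lTensor_comp, D.subtype_comp_shift_ε] at this
  | j + 1, q, _, _, _, D, hD, hq =>
    exact_lTensor_of_lengthLE hR j (q - 1) D.shift hD.shift (by omega)

end Induction

section Comparison

open Limits MonoidalCategory

variable {R : Type u} [CommRing R] {N : Type u} [AddCommGroup N] [Module R N]
  (D : LinearProjResolution R N)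

def complex : ChainComplex (ModuleCat.{u} R) ℕ :=
  ChainComplex.of D.X (fun i => ModuleCat.ofHom (D.d i)) fun i => by
    ext x
    exact (D.exact_d_d i).apply_apply_eq_zero x

lemma complex_d (i : ℕ) : D.complex.d (i + 1) i = ModuleCat.ofHom (D.d i) := by
  simp [complex]

lemma complex_exactAt_succ (i : ℕ) : D.complex.ExactAt (i + 1) := by
  rw [HomologicalComplex.exactAt_iff' _ (i + 1 + 1) (i + 1) i (by simp) (by simp),
    ShortComplex.moduleCat_exact_iff_range_eq_ker]
  simp only [HomologicalComplex.shortComplexFunctor'_obj_f,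
    HomologicalComplex.shortComplexFunctor'_obj_g, complex_d]
  exact (D.exact_d_d i).linearMap_ker_eq.symm

lemma complex_d_comp_ε : D.complex.d 1 0 ≫ ModuleCat.ofHom D.ε = 0 := by
  rw [complex_d]
  ext x
  exact D.exact_d_ε.apply_apply_eq_zero x

noncomputable def toProjectiveResolution : ProjectiveResolution (ModuleCat.of R N) where
  complex := D.complex
  projective i := (IsProjective.iff_projective (D.X i)).1 (D.projective i)
  π := (ChainComplex.toSingle₀Equiv _ _).symm ⟨ModuleCat.ofHom D.ε, D.complex_d_comp_ε⟩
  quasiIso := ⟨fun i => by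
    cases i with
    | zero =>
      rw [ChainComplex.quasiIsoAt₀_iff, ShortComplex.quasiIso_iff_of_zeros' _ rfl rfl rfl]
      have hπ : ((ChainComplex.toSingle₀Equiv D.complex (ModuleCat.of R N)).symm
          ⟨ModuleCat.ofHom D.ε, D.complex_d_comp_ε⟩).f 0 = ModuleCat.ofHom D.ε :=
        ChainComplex.toSingle₀Equiv_symm_apply_f_zero _ _
      constructor
      · rw [ShortComplex.moduleCat_exact_iff_range_eq_ker]
        simp only [HomologicalComplex.shortComplexFunctor'_obj_f, complex_d,
          HomologicalComplex.shortComplexFunctor'_map_τ₂, hπ]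
        exact D.exact_d_ε.linearMap_ker_eq.symm
      · rw [ModuleCat.epi_iff_surjective]
        simp only [HomologicalComplex.shortComplexFunctor'_map_τ₂, hπ]
        exact D.ε_surjective
    | succ i =>
      rw [quasiIsoAt_iff_exactAt' _ _ (ChainComplex.exactAt_succ_single_obj _ _)]
      exact D.complex_exactAt_succ i⟩

noncomputable def ofProjectiveResolution (P : ProjectiveResolution (ModuleCat.of R N)) :
    LinearProjResolution R N where
  X := P.complex.X
  d i := (P.complex.d (i + 1) i).hom
  ε := (P.π.f 0 ≫ (HomologicalComplex.singleObjXSelf _ 0 (ModuleCat.of R N)).hom).hom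
  projective i := (IsProjective.iff_projective _).2 (P.projective i)
  ε_surjective := (ModuleCat.epi_iff_surjective _).1 inferInstance
  exact_d_ε := by
    rw [LinearMap.exact_iff, ModuleCat.hom_comp, LinearMap.ker_comp_of_ker_eq_bot _
      (LinearMap.ker_eq_bot.2 ((ModuleCat.mono_iff_injective _).1 inferInstance))]
    exact ((ShortComplex.moduleCat_exact_iff_range_eq_ker _).1 P.exact₀).symm
  exact_d_d i := LinearMap.exact_iff.2
    ((ShortComplex.moduleCat_exact_iff_range_eq_ker _).1 (P.exact_succ i)).symm

lemma exists_lengthLE_of_hasProjDimLE {n : ℕ} (h : HasProjDimLE R N n) :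
    ∃ D : LinearProjResolution R N, D.LengthLE n :=
  let ⟨P, hP⟩ := h
  ⟨ofProjectiveResolution P, fun i hi => ModuleCat.subsingleton_of_isZero (hP i hi)⟩

lemma extSuccVanishes_of_extVanish {Y : Type u} [AddCommGroup Y] [Module R Y] {k : ℕ}
    (h : extVanish R N Y (k + 1)) : D.ExtSuccVanishes k Y := by
  set C := D.toProjectiveResolution.complex.linearYonedaObj R (ModuleCat.of R Y)
  have hexact : C.ExactAt (k + 1) := by
    rw [HomologicalComplex.exactAt_iff_isZero_homology]
    exact IsZero.of_iso (ModuleCat.isZero_of_subsingleton _)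
      (D.toProjectiveResolution.isoExt (k + 1) (ModuleCat.of R Y)).symm
  rw [HomologicalComplex.exactAt_iff' C k (k + 1) (k + 2) (by simp) (by simp),
    ShortComplex.moduleCat_exact_iff] at hexact
  have hC (i : ℕ) (φ : D.X i →ₗ[R] Y) :
      C.d i (i + 1) (ModuleCat.ofHom φ) = ModuleCat.ofHom (φ ∘ₗ D.d i) := by
    change ModuleCat.ofHom (φ ∘ₗ (D.complex.d (i + 1) i).hom) = _
    rw [complex_d]
    rfl
  intro ψ hψ
  obtain ⟨χ, hχ⟩ := hexact (ModuleCat.ofHom ψ) ((hC (k + 1) ψ).trans (by rw [hψ]; rfl))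
  exact ⟨χ.hom, congr(ModuleCat.Hom.hom $((hC k χ.hom).symm.trans hχ))⟩

lemma torVanish_succ_of_exact (X : Type u) [AddCommGroup X] [Module R X] {j : ℕ}
    (h : Function.Exact ((D.d (j + 1)).lTensor X) ((D.d j).lTensor X)) :
    torVanish R X N (j + 1) := by
  set F := (tensoringLeft (ModuleCat.{u} R)).obj (ModuleCat.of R X)
  set C := (F.mapHomologicalComplex _).obj D.toProjectiveResolution.complex
  have hexact : C.ExactAt (j + 1) := by
    rw [HomologicalComplex.exactAt_iff' C (j + 2) (j + 1) j (by simp) (by simp),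
      ShortComplex.moduleCat_exact_iff_range_eq_ker]
    have hC (i : ℕ) : (F.map (D.complex.d (i + 1) i)).hom = (D.d i).lTensor X := by
      rw [complex_d]
      rfl
    change LinearMap.range (F.map (D.complex.d (j + 1 + 1) (j + 1))).hom =
      LinearMap.ker (F.map (D.complex.d (j + 1) j)).hom
    rw [hC, hC]
    exact h.linearMap_ker_eq.symm
  exact ModuleCat.subsingleton_of_isZero <| IsZero.of_iso
    ((HomologicalComplex.exactAt_iff_isZero_homology _ _).1 hexact)
    (D.toProjectiveResolution.isoLeftDerivedObj F (j + 1))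

end Comparison

section FiniteFree

variable (R : Type u) [CommRing R]

noncomputable def finiteCoverRank (S : Type u) [AddCommGroup S] [Module R S] [Module.Finite R S] :
    ℕ :=
  (Module.Finite.exists_fin' R S).choose

noncomputable def finiteCover (S : Type u) [AddCommGroup S] [Module R S] [Module.Finite R S] :
    (Fin (finiteCoverRank R S) → R) →ₗ[R] S :=
  (Module.Finite.exists_fin' R S).choose_spec.choose

lemma finiteCover_surjective (S : Type u) [AddCommGroup S] [Module R S] [Module.Finite R S] :
    Function.Surjective (finiteCover R S) :=
  (Module.Finite.exists_fin' R S).choose_spec.choose_spec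

variable [IsNoetherianRing R] (M : Type u) [AddCommGroup M] [Module R M] [Module.Finite R M]

noncomputable def finiteSyzygy : ℕ → {S : ModuleCat.{u} R // Module.Finite R S}
  | 0 => ⟨ModuleCat.of R M, ‹_›⟩
  | k + 1 =>
    have := (finiteSyzygy k).2
    ⟨ModuleCat.of R (LinearMap.ker (finiteCover R (finiteSyzygy k).1)), inferInstance⟩

instance (k : ℕ) : Module.Finite R (finiteSyzygy R M k).1 := (finiteSyzygy R M k).2

noncomputable def finiteFree : LinearProjResolution R M where
  X k := ModuleCat.of R (Fin (finiteCoverRank R (finiteSyzygy R M k).1) → R)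
  d k := (LinearMap.ker (finiteCover R (finiteSyzygy R M k).1)).subtype ∘ₗ
    finiteCover R (finiteSyzygy R M (k + 1)).1
  ε := finiteCover R (finiteSyzygy R M 0).1
  projective _ := inferInstance
  ε_surjective := finiteCover_surjective R (finiteSyzygy R M 0).1
  exact_d_ε := exact_subtype_comp_of_surjective (finiteCover_surjective R (finiteSyzygy R M 1).1)
  exact_d_d k := (Submodule.injective_subtype _).comp_exact_iff_exact.2
    (exact_subtype_comp_of_surjective (finiteCover_surjective R (finiteSyzygy R M (k + 2)).1))

instance (k : ℕ) : Module.Finite R ((finiteFree R M).X k) :=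
  inferInstanceAs (Module.Finite R (Fin _ → R))

end FiniteFree

end LinearProjResolution

open LinearProjResolution in
theorem statement_13_general (R : Type u) [CommRing R] [IsNoetherianRing R]
    (t : ℕ)
    (M : Type u) [AddCommGroup M] [Module R M] [Module.Finite R M]
    (r : ℕ)
    (hext : r < t → ∀ i, 1 ≤ i → i ≤ t - r → extVanish R M R i)
    (N : Type u) [AddCommGroup N] [Module R N]
    (hpdN : HasProjDimLE R N (t - r)) :
    (∀ j : ℕ, 0 < j → torVanish R (M →ₗ[R] R) N j) ∧
      Function.Bijective (dualTensorHom R M N) := by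
  have hR : ∀ k, k + 1 ≤ t - r → (finiteFree R M).ExtSuccVanishes k R := fun k hk =>
    (finiteFree R M).extSuccVanishes_of_extVanish (hext (by omega) (k + 1) (by omega) hk)
  obtain ⟨D, hD⟩ := exists_lengthLE_of_hasProjDimLE hpdN
  refine ⟨fun j hj => ?_, dualTensorHom_bijective_of_lengthLE hR _ D hD le_rfl⟩
  obtain ⟨j, rfl⟩ := Nat.exists_eq_add_one_of_ne_zero hj.ne'
  exact D.torVanish_succ_of_exact (Module.Dual R M) (exact_lTensor_of_lengthLE hR j _ D hD le_rfl)

/-- Let `R` be Noetherian local of depth `t`, `0 ≤ r ≤ t`, with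
`Ext_R^i(M, R) = 0` for `1 ≤ i ≤ t − r` when `r < t`, and let `N ≠ 0` be finitely generated
with `pd_R N ≤ t − r`. Then `Tor_j^R(Hom_R(M, R), N) = 0` for all `j > 0` and the natural
evaluation map `Hom_R(M, R) ⊗_R N → Hom_R(M, N)` is an isomorphism. -/
theorem statement_13 (R : Type u) [CommRing R] [IsNoetherianRing R] [IsLocalRing R]
    (t : ℕ) (ht : moduleDepth R R = (t : ℕ∞))
    (M : Type u) [AddCommGroup M] [Module R M] [Module.Finite R M]
    (r : ℕ) (hrt : r ≤ t)
    (hext : r < t → ∀ i, 1 ≤ i → i ≤ t - r → extVanish R M R i)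
    (N : Type u) [AddCommGroup N] [Module R N] [Module.Finite R N] [Nontrivial N]
    (hpdN : HasProjDimLE R N (t - r)) :
    (∀ j : ℕ, 0 < j → torVanish R (M →ₗ[R] R) N j) ∧
      Function.Bijective (dualTensorHom R M N) :=
  statement_13_general R t M r hext N hpdN
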